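/- There exists a constant C > 0 (independent of N) with the following property: fix an integer N ≥ 1; let A(t), t ∈ (−1,1), be the real diagonal N×N matrix with diagonal entries a_1(t), …, a_N(t), where each a_j : (−1,1) → ℝ is C¹ with a_j'(t) ≥ 1 for all t, and let B(t), t ∈ (−1,1), be a Hermitian complex N×N matrix depending C¹ on t with operator norm ‖B'(t)‖ ≤ 1/2 for all t. Then for every ε > 0 the Lebesgue measure of the set {t ∈ (−1,1) : some eigenvalue λ of A(t) + B(t) satisfies |λ| < ε} is at most C N ε. -/

import Mathlib

/-!
Write `H(t) = A(t) + B(t)`. For `t ≤ s` the diagonal part grows by at least `s - t` as a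
quadratic form while `B` moves by at most `(s - t)/2` in norm, so `H(s) ≥ H(t) + (s - t)/2`.
Hence the number `k(t)` of eigenvalues `≥ ε` of `H(t)`, read through min–max as the largest
dimension of a subspace on which `H(t) ≥ ε`, is nondecreasing; and if `H(t)` has an eigenvalue
in `(-ε, ε)`, then `H(t) ≥ -ε` on a subspace of dimension `k(t) + 1`, so `k(t + 4ε) > k(t)`.
Each of the `N` possible values of `k` is thus taken on the bad set within a window of length
`4ε`; adding the last `4ε` of the interval gives `4ε(N + 1) ≤ 8Nε`.
-/

open Module RCLike Matrix MeasureTheory Set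

namespace ContinuousLinearMap

variable {𝕜 E : Type*} [RCLike 𝕜] [NormedAddCommGroup E] [InnerProductSpace 𝕜 E]

local notation "⟪" x ", " y "⟫" => inner 𝕜 x y

theorem reApplyInnerSelf_add_of_apply_eq_smul (T : E →L[𝕜] E)
    (hT : (T : E →ₗ[𝕜] E).IsSymmetric) {r : ℝ} {v z : E} (hz : T z = (r : 𝕜) • z) :
    T.reApplyInnerSelf (v + z) = T.reApplyInnerSelf v + r * (‖v + z‖ ^ 2 - ‖v‖ ^ 2) := by
  have hcross : ⟪T v, z⟫ = (r : 𝕜) * ⟪v, z⟫ := by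
    rw [← coe_coe, hT, coe_coe, hz, inner_smul_right]
  simp only [reApplyInnerSelf_apply, map_add, hz, inner_add_left, inner_add_right,
    inner_smul_left, hcross, norm_add_sq (𝕜 := 𝕜), conj_ofReal, re_ofReal_mul,
    inner_self_eq_norm_sq]
  rw [inner_re_symm (𝕜 := 𝕜) z v]
  ring

theorem reApplyInnerSelf_add (T S : E →L[𝕜] E) (v : E) :
    (T + S).reApplyInnerSelf v = T.reApplyInnerSelf v + S.reApplyInnerSelf v := by
  simp only [reApplyInnerSelf_apply, _root_.add_apply, inner_add_left, map_add]

theorem abs_reApplyInnerSelf_le (T : E →L[𝕜] E) (v : E) :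
    |T.reApplyInnerSelf v| ≤ ‖T‖ * ‖v‖ ^ 2 :=
  calc |T.reApplyInnerSelf v| ≤ ‖⟪T v, v⟫‖ := abs_re_le_norm _
    _ ≤ ‖T v‖ * ‖v‖ := norm_inner_le_norm _ _
    _ ≤ ‖T‖ * ‖v‖ * ‖v‖ := by gcongr; exact T.le_opNorm v
    _ = ‖T‖ * ‖v‖ ^ 2 := by ring

variable [FiniteDimensional 𝕜 E]

/-- By min–max, for self-adjoint `T` this is the number of eigenvalues `≥ x`, counted with
multiplicity. -/
noncomputable def eigenCountGE (T : E →L[𝕜] E) (x : ℝ) : ℕ :=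
  sSup {d | ∃ V : Submodule 𝕜 E, finrank 𝕜 V = d ∧
    ∀ v ∈ V, x * ‖v‖ ^ 2 ≤ T.reApplyInnerSelf v}

variable (T T' : E →L[𝕜] E)

theorem bddAbove_eigenCountGE_set (x : ℝ) :
    BddAbove {d | ∃ V : Submodule 𝕜 E, finrank 𝕜 V = d ∧
      ∀ v ∈ V, x * ‖v‖ ^ 2 ≤ T.reApplyInnerSelf v} :=
  ⟨finrank 𝕜 E, by rintro _ ⟨V, rfl, -⟩; exact V.finrank_le⟩

theorem eigenCountGE_le_finrank (x : ℝ) : T.eigenCountGE x ≤ finrank 𝕜 E :=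
  csSup_le' (by rintro _ ⟨V, rfl, -⟩; exact V.finrank_le)

theorem exists_submodule_finrank_eq_eigenCountGE (x : ℝ) :
    ∃ V : Submodule 𝕜 E, finrank 𝕜 V = T.eigenCountGE x ∧
      ∀ v ∈ V, x * ‖v‖ ^ 2 ≤ T.reApplyInnerSelf v :=
  Nat.sSup_mem (by exact ⟨0, ⊥, finrank_bot 𝕜 E, by simp [reApplyInnerSelf_apply]⟩)
    (T.bddAbove_eigenCountGE_set x)

theorem finrank_le_eigenCountGE {x : ℝ} (V : Submodule 𝕜 E)
    (hV : ∀ v ∈ V, x * ‖v‖ ^ 2 ≤ T.reApplyInnerSelf v) :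
    finrank 𝕜 V ≤ T.eigenCountGE x :=
  le_csSup (T.bddAbove_eigenCountGE_set x) ⟨V, rfl, hV⟩

theorem eigenCountGE_le_of_forall {c x : ℝ}
    (h : ∀ v, T.reApplyInnerSelf v + c * ‖v‖ ^ 2 ≤ T'.reApplyInnerSelf v) :
    T.eigenCountGE x ≤ T'.eigenCountGE (x + c) := by
  obtain ⟨V, hV, hform⟩ := T.exists_submodule_finrank_eq_eigenCountGE x
  refine hV ▸ T'.finrank_le_eigenCountGE V fun v hv => ?_
  linarith [hform v hv, h v]

theorem eigenCountGE_antitone : Antitone T.eigenCountGE := fun x y hxy => by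
  simpa using T.eigenCountGE_le_of_forall T (c := x - y) (x := y)
    fun v => by nlinarith [sq_nonneg ‖v‖]

theorem eigenCountGE_lt_of_apply_eq_smul (hT : (T : E →ₗ[𝕜] E).IsSymmetric) {r x y : ℝ}
    {w : E} (hw0 : w ≠ 0) (hw : T w = (r : 𝕜) • w) (hxr : x ≤ r) (hry : r < y) :
    T.eigenCountGE y < T.eigenCountGE x := by
  obtain ⟨V, hV, hform⟩ := T.exists_submodule_finrank_eq_eigenCountGE y
  have hwV : w ∉ V := fun hwV => by
    have h := hform w hwV
    rw [reApplyInnerSelf_apply, hw, inner_smul_left, conj_ofReal, re_ofReal_mul,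
      inner_self_eq_norm_sq] at h
    have : 0 < ‖w‖ ^ 2 := by positivity
    nlinarith
  have hsup : ∀ u ∈ V ⊔ 𝕜 ∙ w, x * ‖u‖ ^ 2 ≤ T.reApplyInnerSelf u := by
    intro u hu
    obtain ⟨v, hv, z, hz, rfl⟩ := Submodule.mem_sup.mp hu
    obtain ⟨c, rfl⟩ := Submodule.mem_span_singleton.mp hz
    have hTz : T (c • w) = (r : 𝕜) • c • w := by rw [map_smul, hw, smul_comm]
    rw [T.reApplyInnerSelf_add_of_apply_eq_smul hT hTz]
    nlinarith [hform v hv, sq_nonneg ‖v‖, sq_nonneg ‖v + c • w‖]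
  calc T.eigenCountGE y < finrank 𝕜 V + 1 := by omega
    _ = finrank 𝕜 ↥(V ⊔ 𝕜 ∙ w) := (Submodule.finrank_sup_span_singleton hwV).symm
    _ ≤ T.eigenCountGE x := T.finrank_le_eigenCountGE _ hsup

theorem exists_apply_eq_re_smul_of_mem_spectrum (hT : (T : E →ₗ[𝕜] E).IsSymmetric)
    {μ : 𝕜} (hμ : μ ∈ spectrum 𝕜 T) : ∃ w ≠ 0, T w = (re μ : 𝕜) • w := by
  have : CompleteSpace E := FiniteDimensional.complete 𝕜 E
  rw [ContinuousLinearMap.spectrum_eq, ← Module.End.hasEigenvalue_iff_mem_spectrum] at hμ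
  obtain ⟨w, hw, hw0⟩ := hμ.exists_hasEigenvector
  refine ⟨w, hw0, ?_⟩
  rw [conj_eq_iff_re.mp (hT.conj_eigenvalue_eq_self hμ)]
  exact Module.End.mem_eigenspace_iff.mp hw

theorem eigenCountGE_lt_of_mem_spectrum (hT : (T : E →ₗ[𝕜] E).IsSymmetric) {μ : 𝕜}
    (hμ : μ ∈ spectrum 𝕜 T) {x y : ℝ} (hx : x ≤ re μ) (hy : re μ < y) :
    T.eigenCountGE y < T.eigenCountGE x :=
  have ⟨_, hw0, hw⟩ := T.exists_apply_eq_re_smul_of_mem_spectrum hT hμ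
  T.eigenCountGE_lt_of_apply_eq_smul hT hw0 hw hx hy

end ContinuousLinearMap

namespace Matrix

variable {𝕜 n : Type*} [RCLike 𝕜] [Fintype n] [DecidableEq n]

theorem reApplyInnerSelf_toEuclideanCLM_diagonal (r : n → ℝ) (v : EuclideanSpace 𝕜 n) :
    (toEuclideanCLM (𝕜 := 𝕜) (diagonal fun j => (r j : 𝕜))).reApplyInnerSelf v =
      ∑ j, r j * ‖v j‖ ^ 2 := by
  simp only [ContinuousLinearMap.reApplyInnerSelf_apply, PiLp.inner_apply, ofLp_toEuclideanCLM,
    mulVec_diagonal, map_sum, inner_apply, map_mul, conj_ofReal, mul_left_comm _ (r _ : 𝕜),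
    RCLike.mul_conj]
  norm_cast

theorem hasDerivAt_toEuclideanCLM {B B' : ℝ → Matrix n n 𝕜} {t : ℝ}
    (h : ∀ i j, HasDerivAt (fun s => B s i j) (B' t i j) t) :
    HasDerivAt (fun s => toEuclideanCLM (𝕜 := 𝕜) (B s))
      (toEuclideanCLM (𝕜 := 𝕜) (B' t)) t := by
  let _ := Matrix.normedAddCommGroup (m := n) (n := n) (α := 𝕜)
  let _ := Matrix.normedSpace (R := ℝ) (m := n) (n := n) (α := 𝕜)
  have hB : HasDerivAt B (B' t) t := hasDerivAt_pi.2 fun i => hasDerivAt_pi.2 fun j => h i j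
  let L := (toEuclideanCLM (𝕜 := 𝕜) (n := n)).toAlgEquiv.toLinearMap.restrictScalars ℝ
  exact L.toContinuousLinearMap.hasFDerivAt.comp_hasDerivAt t hB

theorem reApplyInnerSelf_toEuclideanCLM_diagonal_add_le {D : Set ℝ} (hD : Convex ℝ D)
    {a : n → ℝ → ℝ} {α β : ℝ} (ha : ∀ j, DifferentiableOn ℝ (a j) D)
    (ha' : ∀ j, ∀ t ∈ D, α ≤ deriv (a j) t) {B B' : ℝ → Matrix n n 𝕜}
    (hB : ∀ t ∈ D, HasDerivAt (fun s => toEuclideanCLM (𝕜 := 𝕜) (B s))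
      (toEuclideanCLM (𝕜 := 𝕜) (B' t)) t)
    (hB' : ∀ t ∈ D, ‖toEuclideanCLM (𝕜 := 𝕜) (B' t)‖ ≤ β)
    {t s : ℝ} (ht : t ∈ D) (hs : s ∈ D) (hts : t ≤ s) (v : EuclideanSpace 𝕜 n) :
    (toEuclideanCLM (𝕜 := 𝕜) (diagonal (fun j => (a j t : 𝕜)) + B t)).reApplyInnerSelf v
        + (α - β) * (s - t) * ‖v‖ ^ 2 ≤
      (toEuclideanCLM (𝕜 := 𝕜)
        (diagonal (fun j => (a j s : 𝕜)) + B s)).reApplyInnerSelf v := by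
  have hdiag : α * (s - t) * ‖v‖ ^ 2 ≤ (toEuclideanCLM (𝕜 := 𝕜)
      (diagonal fun j => ((a j s - a j t : ℝ) : 𝕜))).reApplyInnerSelf v := by
    rw [reApplyInnerSelf_toEuclideanCLM_diagonal, EuclideanSpace.norm_sq_eq, Finset.mul_sum]
    gcongr with j
    exact hD.mul_sub_le_image_sub_of_le_deriv (ha j).continuousOn ((ha j).mono interior_subset)
      (fun x hx => ha' j x (interior_subset hx)) t ht s hs hts
  have hnorm : ‖toEuclideanCLM (𝕜 := 𝕜) (B s) - toEuclideanCLM (𝕜 := 𝕜) (B t)‖ ≤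
      β * (s - t) := by
    have := hD.norm_image_sub_le_of_norm_hasDerivWithin_le
      (fun x hx => (hB x hx).hasDerivWithinAt) hB' ht hs
    rwa [Real.norm_eq_abs, abs_of_nonneg (sub_nonneg.2 hts)] at this
  have hBpart := abs_le.mp <| ContinuousLinearMap.abs_reApplyInnerSelf_le
    (toEuclideanCLM (𝕜 := 𝕜) (B s) - toEuclideanCLM (𝕜 := 𝕜) (B t)) v
  have hsplit : toEuclideanCLM (𝕜 := 𝕜) (diagonal (fun j => (a j s : 𝕜)) + B s) =
      toEuclideanCLM (𝕜 := 𝕜) (diagonal (fun j => (a j t : 𝕜)) + B t)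
        + toEuclideanCLM (𝕜 := 𝕜) (diagonal fun j => ((a j s - a j t : ℝ) : 𝕜))
        + (toEuclideanCLM (𝕜 := 𝕜) (B s) - toEuclideanCLM (𝕜 := 𝕜) (B t)) := by
    rw [← map_sub, ← map_add, ← map_add]
    congr 1
    simp only [ofReal_sub, ← diagonal_sub]
    abel
  rw [hsplit, ContinuousLinearMap.reApplyInnerSelf_add, ContinuousLinearMap.reApplyInnerSelf_add]
  nlinarith [mul_le_mul_of_nonneg_right hnorm (sq_nonneg ‖v‖)]

theorem isSymmetric_toEuclideanCLM_diagonal_add (r : n → ℝ) {B : Matrix n n 𝕜}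
    (hB : B.IsHermitian) :
    (toEuclideanCLM (𝕜 := 𝕜) (diagonal (fun j => (r j : 𝕜)) + B) :
      EuclideanSpace 𝕜 n →ₗ[𝕜] EuclideanSpace 𝕜 n).IsSymmetric := by
  rw [coe_toEuclideanCLM_eq_toEuclideanLin, isSymmetric_toEuclideanLin_iff]
  exact (isHermitian_diagonal_of_self_adjoint _ (funext fun j => conj_ofReal _)).add hB

end Matrix

theorem volume_le_of_monotoneOn_of_lt_add {I S : Set ℝ} {k : ℝ → ℕ} {N : ℕ} {δ : ℝ}
    (hk : MonotoneOn k I) (hkN : ∀ t ∈ I, k t ≤ N) (hS : S ⊆ I)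
    (hjump : ∀ t ∈ S, t + δ ∈ I → k t < k (t + δ)) :
    volume {t ∈ S | t + δ ∈ I} ≤ N * ENNReal.ofReal δ := by
  set level : ℕ → Set ℝ := fun m => {t ∈ S | t + δ ∈ I ∧ k t = m}
  have hcover : {t ∈ S | t + δ ∈ I} ⊆ ⋃ m ∈ Finset.range N, level m := by
    rintro t ⟨htS, htδ⟩
    have := (hjump t htS htδ).trans_le (hkN _ htδ)
    exact mem_biUnion (Finset.mem_range.mpr this) ⟨htS, htδ, rfl⟩
  have hclose : ∀ m, ∀ x ∈ level m, ∀ y ∈ level m, y - x ≤ δ := by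
    rintro m x ⟨hxS, hxδ, rfl⟩ y ⟨hyS, -, hy⟩
    by_contra! hδ
    have := hk hxδ (hS hyS) (by linarith)
    linarith [hjump x hxS hxδ]
  have hlevel : ∀ m, volume (level m) ≤ ENNReal.ofReal δ := fun m =>
    (Real.volume_le_diam _).trans <| Metric.ediam_le fun x hx y hy => by
      rw [edist_dist, Real.dist_eq]
      refine ENNReal.ofReal_le_ofReal (abs_le.mpr ⟨?_, ?_⟩)
      · linarith [hclose m x hx y hy]
      · linarith [hclose m y hy x hx]
  calc volume {t ∈ S | t + δ ∈ I} ≤ ∑ m ∈ Finset.range N, volume (level m) :=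
        (measure_mono hcover).trans (measure_biUnion_finset_le _ _)
    _ ≤ ∑ m ∈ Finset.range N, ENNReal.ofReal δ := Finset.sum_le_sum fun m _ => hlevel m
    _ = N * ENNReal.ofReal δ := by simp

theorem volume_le_of_monotoneOn_Ioo_of_lt_add {a b δ : ℝ} (hδ : 0 ≤ δ) {S : Set ℝ}
    {k : ℝ → ℕ} {N : ℕ} (hk : MonotoneOn k (Ioo a b)) (hkN : ∀ t ∈ Ioo a b, k t ≤ N)
    (hS : S ⊆ Ioo a b) (hjump : ∀ t ∈ S, t + δ ∈ Ioo a b → k t < k (t + δ)) :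
    volume S ≤ (N + 1) * ENNReal.ofReal δ := by
  have hcover : S ⊆ {t ∈ S | t + δ ∈ Ioo a b} ∪ Icc (b - δ) b := by
    intro t htS
    by_cases h : t + δ < b
    · exact Or.inl ⟨htS, by linarith [(hS htS).1], h⟩
    · exact Or.inr ⟨by linarith, (hS htS).2.le⟩
  calc volume S ≤ volume {t ∈ S | t + δ ∈ Ioo a b} + volume (Icc (b - δ) b) :=
        (measure_mono hcover).trans (measure_union_le _ _)
    _ ≤ N * ENNReal.ofReal δ + ENNReal.ofReal δ := by
        gcongr
        · exact volume_le_of_monotoneOn_of_lt_add hk hkN hS hjump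
        · rw [Real.volume_Icc, sub_sub_cancel]
    _ = (N + 1) * ENNReal.ofReal δ := by ring

/-- Lemma A2: there is `C > 0` (independent of `N`) such that: if `A(t)` is a real
diagonal `N×N` matrix with `C¹` diagonal entries `a_j(t)` satisfying `a_j'(t) ≥ 1`
on `(−1,1)`, and `B(t)` is a Hermitian `N×N` matrix depending `C¹` on `t` with
`‖B'(t)‖ ≤ 1/2` in operator norm, then for every `ε > 0` the Lebesgue measure of
`{t ∈ (−1,1) : some eigenvalue λ of A(t)+B(t) has |λ| < ε}` is at most `C N ε`. -/
theorem stmt_18 :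
    ∃ C : ℝ, 0 < C ∧ ∀ N : ℕ, 1 ≤ N →
      ∀ a : Fin N → ℝ → ℝ,
        (∀ j, ContDiffOn ℝ 1 (a j) (Set.Ioo (-1 : ℝ) 1)) →
        (∀ j, ∀ t ∈ Set.Ioo (-1 : ℝ) 1, 1 ≤ deriv (a j) t) →
      ∀ B B' : ℝ → Matrix (Fin N) (Fin N) ℂ,
        (∀ t ∈ Set.Ioo (-1 : ℝ) 1, (B t).IsHermitian) →
        (∀ i j, ∀ t ∈ Set.Ioo (-1 : ℝ) 1,
          HasDerivAt (fun s => B s i j) (B' t i j) t) →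
        (∀ i j, ContinuousOn (fun s => B' s i j) (Set.Ioo (-1 : ℝ) 1)) →
        (∀ t ∈ Set.Ioo (-1 : ℝ) 1,
          ‖Matrix.toEuclideanCLM (𝕜 := ℂ) (B' t)‖ ≤ 1 / 2) →
      ∀ ε : ℝ, 0 < ε →
        MeasureTheory.volume {t | t ∈ Set.Ioo (-1 : ℝ) 1 ∧
            ∃ μ : ℂ, μ ∈ spectrum ℂ
              (Matrix.diagonal (fun j => ((a j t : ℝ) : ℂ)) + B t) ∧ ‖μ‖ < ε} ≤
          ENNReal.ofReal (C * N * ε) := by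
  refine ⟨8, by norm_num, fun N hN a ha ha' B B' hBh hBd _ hB' ε hε => ?_⟩
  set H := fun t => toEuclideanCLM (𝕜 := ℂ) (diagonal (fun j => ((a j t : ℝ) : ℂ)) + B t)
  have hstep : ∀ t ∈ Ioo (-1 : ℝ) 1, ∀ s ∈ Ioo (-1 : ℝ) 1, t ≤ s → ∀ x,
      (H t).eigenCountGE x ≤ (H s).eigenCountGE (x + (1 - 1 / 2) * (s - t)) :=
    fun t ht s hs hts x => ContinuousLinearMap.eigenCountGE_le_of_forall _ _ <|
      reApplyInnerSelf_toEuclideanCLM_diagonal_add_le (convex_Ioo _ _)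
        (fun j => (ha j).differentiableOn one_ne_zero) ha'
        (fun t ht => hasDerivAt_toEuclideanCLM fun i j => hBd i j t ht) hB' ht hs hts
  have hjump : ∀ t ∈ Ioo (-1 : ℝ) 1,
      ∀ μ ∈ spectrum ℂ (diagonal (fun j => ((a j t : ℝ) : ℂ)) + B t), ‖μ‖ < ε →
      t + 4 * ε ∈ Ioo (-1 : ℝ) 1 →
      (H t).eigenCountGE ε < (H (t + 4 * ε)).eigenCountGE ε := by
    intro t ht μ hμ hμε ht'
    rw [← AlgEquiv.spectrum_eq (toEuclideanCLM (𝕜 := ℂ) (n := Fin N))] at hμ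
    have hre := abs_lt.mp ((abs_re_le_norm μ).trans_lt hμε)
    calc (H t).eigenCountGE ε < (H t).eigenCountGE (-ε) :=
          (H t).eigenCountGE_lt_of_mem_spectrum
            (isSymmetric_toEuclideanCLM_diagonal_add _ (hBh t ht)) hμ (by linarith) (by linarith)
      _ ≤ (H (t + 4 * ε)).eigenCountGE (-ε + (1 - 1 / 2) * (t + 4 * ε - t)) :=
          hstep t ht _ ht' (by linarith) _
      _ = (H (t + 4 * ε)).eigenCountGE ε := congrArg _ (by ring)
  have hmono : MonotoneOn (fun t => (H t).eigenCountGE ε) (Ioo (-1) 1) :=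
    fun t ht s hs hts => (hstep t ht s hs hts ε).trans ((H s).eigenCountGE_antitone (by linarith))
  have hkN : ∀ t ∈ Ioo (-1 : ℝ) 1, (H t).eigenCountGE ε ≤ N := fun t _ =>
    ((H t).eigenCountGE_le_finrank ε).trans_eq finrank_euclideanSpace_fin
  refine (volume_le_of_monotoneOn_Ioo_of_lt_add (δ := 4 * ε) (by positivity) hmono hkN
    (fun t ht => ht.1)
    (by rintro t ⟨ht, μ, hμ, hμε⟩; exact hjump t ht μ hμ hμε)).trans ?_
  rw [← ENNReal.ofReal_natCast, ← ENNReal.ofReal_one,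
    ← ENNReal.ofReal_add (by positivity) zero_le_one, ← ENNReal.ofReal_mul (by positivity)]
  have hN' : (1 : ℝ) ≤ N := Nat.one_le_cast.mpr hN
  exact ENNReal.ofReal_le_ofReal (by nlinarith)
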